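/- arXiv:2007.07940 — 3 statements merged into one kernel-verified Lean document; each statement's English description precedes it below -/
import Mathlib

section
/- Let T₁ = ({S_i}, M) and T₂ = ({Q_i}, N) be asynchronous transformation monoids, and suppose (m, f) ∈ M × F(S_𝒫, N) represents a P-map in the asynchronous wreath product T₁ ≀ T₂ (acting on pairs of global states by (m,f)(s,q) = (m(s), f(s)(q))). Then: (1) m is a P-map in T₁; (2) for every global state s ∈ S_𝒫, f(s) is a P-map in T₂; and (3) if s, s' ∈ S_𝒫 agree on all coordinates in P, then f(s) = f(s'). -/
/-- `h` is a `P`-map: it fixes coordinates outside `P` and its effect on the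
`P`-coordinates depends only on the `P`-coordinates of the input. -/
def IsPMap {ι : Type} {S : ι → Type} (P : Set ι)
    (h : (∀ i, S i) → (∀ i, S i)) : Prop :=
  (∀ s, ∀ i ∉ P, h s i = s i) ∧
  (∀ s s', (∀ i ∈ P, s i = s' i) → ∀ i ∈ P, h s i = h s' i)

/-- combinatorial lemma: if `(m, f)` represents a `P`-map in the
asynchronous wreath product `T₁ ≀ T₂` (acting on global states of the family
`i ↦ S i × Q i`, identified coordinatewise with pairs of global states), then
`m` is a `P`-map, each `f s` is a `P`-map, and `f s` depends only on the
`P`-coordinates of `s`. -/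
theorem wreath_combinatorial_lemma {ι : Type} [Finite ι]
    {S Q : ι → Type} [∀ i, Finite (S i)] [∀ i, Nonempty (S i)]
    [∀ i, Finite (Q i)] [∀ i, Nonempty (Q i)]
    (P : Set ι)
    (m : (∀ i, S i) → (∀ i, S i))
    (f : (∀ i, S i) → ((∀ i, Q i) → (∀ i, Q i)))
    (hP : IsPMap P (fun (g : ∀ i, S i × Q i) =>
      (fun i => (m (fun j => (g j).1) i,
                 f (fun j => (g j).1) (fun j => (g j).2) i) : ∀ i, S i × Q i))) :
    IsPMap P m ∧
    (∀ s, IsPMap P (f s)) ∧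
    (∀ s s', (∀ i ∈ P, s i = s' i) → f s = f s') := by
  obtain ⟨h1, h2⟩ := hP
  have key1 : ∀ s q, ∀ i ∉ P,
      m s i = s i ∧ f s q i = q i := by
    intro s q i hi
    have := h1 (fun j => (s j, q j)) i hi
    exact ⟨congrArg Prod.fst this, congrArg Prod.snd this⟩
  have key2 : ∀ s s' q q', (∀ i ∈ P, s i = s' i) → (∀ i ∈ P, q i = q' i) →
      ∀ i ∈ P, m s i = m s' i ∧ f s q i = f s' q' i := by
    intro s s' q q' hs hq i hi
    have := h2 (fun j => (s j, q j)) (fun j => (s' j, q' j))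
      (fun j hj => by simp [hs j hj, hq j hj]) i hi
    exact ⟨congrArg Prod.fst this, congrArg Prod.snd this⟩
  refine ⟨⟨?_, ?_⟩, fun s => ⟨?_, ?_⟩, ?_⟩
  · intro s i hi
    exact (key1 s (fun j => Classical.arbitrary _) i hi).1
  · intro s s' hs i hi
    exact (key2 s s' (fun j => Classical.arbitrary _) (fun j => Classical.arbitrary _)
      hs (fun _ _ => rfl) i hi).1
  · intro q i hi
    exact (key1 s q i hi).2
  · intro q q' hq i hi
    exact (key2 s s q q' (fun _ _ => rfl) hq i hi).2
  · intro s s' hs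
    funext q i
    by_cases hi : i ∈ P
    · exact (key2 s s' q q hs (fun _ _ => rfl) i hi).2
    · rw [(key1 s q i hi).2, (key1 s' q i hi).2]
end

section
/- (Local wreath product principle, direction 1.) Let A be an asynchronous automaton over Σ̃ with transition atm T_A and local asynchronous transducer χ_A : TR(Σ̃) → TR(Σ̃^{∥S}). If a trace language L ⊆ TR(Σ̃^{∥S}) is recognized by an atm T via an asynchronous morphism, then χ_A^{-1}(L) ⊆ TR(Σ̃) is recognized by the asynchronous wreath product T_A ≀ T. Specifically, defining η(a) = (φ_A(a), f_a) with f_a(s) = ψ((a, s_a)) (where ψ recognizes L), η extends to an asynchronous morphism recognizing χ_A^{-1}(L) with initial state (s_in, q_in) and final set S_𝒫 × Q_fin. -/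
/-- `P`-map condition on pairs of global states (coordinatewise
identification `(S_i × Q_i)_𝒫 ≅ S_𝒫 × Q_𝒫`). -/
def IsPMap2 {ι : Type} {S Q : ι → Type} (P : Set ι)
    (h : ((∀ i, S i) × (∀ i, Q i)) → ((∀ i, S i) × (∀ i, Q i))) : Prop :=
  (∀ p, ∀ i ∉ P, (h p).1 i = p.1 i ∧ (h p).2 i = p.2 i) ∧
  (∀ p p', (∀ i ∈ P, p.1 i = p'.1 i ∧ p.2 i = p'.2 i) →
    ∀ i ∈ P, (h p).1 i = (h p').1 i ∧ (h p).2 i = (h p').2 i)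

/-- The trace congruence: `ab ∼ ba` whenever `loc a ∩ loc b = ∅`. -/
def traceCon {ι A : Type} (loc : A → Finset ι) : Con (FreeMonoid A) :=
  conGen (fun x y => ∃ a b, Disjoint (loc a) (loc b) ∧
    x = FreeMonoid.of a * FreeMonoid.of b ∧ y = FreeMonoid.of b * FreeMonoid.of a)

/-- The extended alphabet `Σ^{∥S}`. -/
def ExtLetter {ι : Type} (A : Type) (loc : A → Finset ι) (S : ι → Type) : Type :=
  (a : A) × (∀ i : {x // x ∈ loc a}, S i.1)

def locE {ι A : Type} (loc : A → Finset ι) {S : ι → Type} :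
    ExtLetter A loc S → Finset ι := fun e => loc e.1

/-- The word-level local asynchronous transducer. -/
def transduce {ι A : Type} (loc : A → Finset ι) {S : ι → Type}
    (Δ : A → (∀ i, S i) → (∀ i, S i)) :
    (∀ i, S i) → List A → List (ExtLetter A loc S)
  | _, [] => []
  | s, a :: w => ⟨a, fun i => s i.1⟩ :: transduce loc Δ (Δ a s) w

/-!
The wreath product runs `A` on the first component and, on the second, feeds `ψ` the letter
`(a, s_a)` read off the current state of `A`; this is exactly the letter the transducer `χ_A`
emits, so along any word the second component computes `ψ (χ_A w) q_in`. The action is well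
defined on traces because letters with disjoint locations commute in both components: the
`P`-maps `Δ a`, `Δ b` commute and leave each other's local states (hence the emitted letters)
unchanged, and `ψ` is defined on traces.
-/

section PMap

variable {ι : Type} {S : ι → Type} {P P' : Set ι} {f g : (∀ i, S i) → (∀ i, S i)}

theorem IsPMap.apply_comp_of_mem (hf : IsPMap P f) (hg : IsPMap P' g) (hd : Disjoint P P')
    (s : ∀ i, S i) {i : ι} (hi : i ∈ P) : f (g s) i = f s i :=
  hf.2 _ _ (fun j hj => hg.1 s j (Set.disjoint_left.1 hd hj)) i hi

theorem IsPMap.comp_comm (hf : IsPMap P f) (hg : IsPMap P' g) (hd : Disjoint P P') :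
    f ∘ g = g ∘ f := by
  funext s i
  by_cases hiP : i ∈ P
  · have hiP' : i ∉ P' := Set.disjoint_left.1 hd hiP
    simp only [Function.comp_apply, hf.apply_comp_of_mem hg hd s hiP, hg.1 _ i hiP']
  · by_cases hiP' : i ∈ P'
    · simp only [Function.comp_apply, hg.apply_comp_of_mem hf hd.symm s hiP', hf.1 _ i hiP]
    · simp only [Function.comp_apply, hf.1 _ i hiP, hg.1 _ i hiP']

end PMap

section Trace

variable {ι A X : Type} (loc : A → Finset ι)

theorem traceCon_mk'_of_mul_of_comm {a b : A} (hd : Disjoint (loc a) (loc b)) :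
    (traceCon loc).mk' (FreeMonoid.of a * FreeMonoid.of b) =
      (traceCon loc).mk' (FreeMonoid.of b * FreeMonoid.of a) :=
  (Con.eq _).2 (ConGen.Rel.of _ _ ⟨a, b, hd, rfl, rfl⟩)

theorem comp_comm_of_disjoint {H : (traceCon loc).Quotient → X → X}
    (hmul : ∀ u v, H (u * v) = H v ∘ H u) {a b : A} (hd : Disjoint (loc a) (loc b)) :
    H ((traceCon loc).mk' (FreeMonoid.of b)) ∘ H ((traceCon loc).mk' (FreeMonoid.of a)) =
      H ((traceCon loc).mk' (FreeMonoid.of a)) ∘ H ((traceCon loc).mk' (FreeMonoid.of b)) := by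
  rw [← hmul, ← hmul, ← map_mul, ← map_mul, traceCon_mk'_of_mul_of_comm loc hd]

theorem apply_mk'_ofList {c : Con (FreeMonoid A)} {H : c.Quotient → X → X} (h1 : H 1 = id)
    (hmul : ∀ u v, H (u * v) = H v ∘ H u) (w : List A) (x : X) :
    H (c.mk' (FreeMonoid.ofList w)) x = w.foldl (fun x a => H (c.mk' (FreeMonoid.of a)) x) x := by
  induction w generalizing x with
  | nil => simp [h1]
  | cons a w ih =>
    rw [FreeMonoid.ofList_cons, map_mul, hmul, Function.comp_apply, ih, List.foldl_cons]

def traceAct (step : A → X → X)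
    (hstep : ∀ a b, Disjoint (loc a) (loc b) → step b ∘ step a = step a ∘ step b)
    (t : (traceCon loc).Quotient) : X → X :=
  MulOpposite.unop (α := Function.End X) <|
    (traceCon loc).lift (FreeMonoid.lift fun a => .op (α := Function.End X) (step a))
      (Con.conGen_le.2 <| by
        rintro _ _ ⟨a, b, hd, rfl, rfl⟩
        simp only [Con.ker_rel, map_mul, FreeMonoid.lift_eval_of]
        exact congrArg MulOpposite.op (hstep a b hd)) t

variable (step : A → X → X)
  (hstep : ∀ a b, Disjoint (loc a) (loc b) → step b ∘ step a = step a ∘ step b)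

theorem traceAct_one : traceAct loc step hstep 1 = id := by
  simp only [traceAct, map_one]; rfl

theorem traceAct_mul (u v : (traceCon loc).Quotient) :
    traceAct loc step hstep (u * v) = traceAct loc step hstep v ∘ traceAct loc step hstep u := by
  simp only [traceAct, map_mul]; rfl

theorem traceAct_mk'_of (a : A) :
    traceAct loc step hstep ((traceCon loc).mk' (FreeMonoid.of a)) = step a :=
  rfl

end Trace

section Wreath

variable {ι A : Type} {loc : A → Finset ι} {S Q : ι → Type}

theorem extLetter_congr {a : A} {s s' : ∀ i, S i} (h : ∀ i ∈ loc a, s i = s' i) :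
    (⟨a, fun i => s i.1⟩ : ExtLetter A loc S) = ⟨a, fun i => s' i.1⟩ :=
  congrArg _ (funext fun i => h i.1 i.2)

/-- The action of the letter `a` on `T_A ≀ T`; `σ e` is the action on `T` of the extended
letter `e`. -/
def wreathStep (Δ : A → (∀ i, S i) → (∀ i, S i))
    (σ : ExtLetter A loc S → (∀ i, Q i) → (∀ i, Q i)) (a : A)
    (p : (∀ i, S i) × (∀ i, Q i)) : (∀ i, S i) × (∀ i, Q i) :=
  (Δ a p.1, σ ⟨a, fun i => p.1 i.1⟩ p.2)

variable {Δ : A → (∀ i, S i) → (∀ i, S i)} {σ : ExtLetter A loc S → (∀ i, Q i) → (∀ i, Q i)}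

theorem wreathStep_comm (hΔ : ∀ a, IsPMap ↑(loc a) (Δ a))
    (hσ : ∀ e f : ExtLetter A loc S, Disjoint (loc e.1) (loc f.1) → σ f ∘ σ e = σ e ∘ σ f)
    {a b : A} (hd : Disjoint (loc a) (loc b)) :
    wreathStep Δ σ b ∘ wreathStep Δ σ a = wreathStep Δ σ a ∘ wreathStep Δ σ b := by
  have hdc : Disjoint (loc a : Set ι) (loc b) := Finset.disjoint_coe.2 hd
  funext p
  have letter_b : (⟨b, fun i => Δ a p.1 i.1⟩ : ExtLetter A loc S) = ⟨b, fun i => p.1 i.1⟩ :=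
    extLetter_congr fun i hi => (hΔ a).1 _ i (Set.disjoint_right.1 hdc hi)
  have letter_a : (⟨a, fun i => Δ b p.1 i.1⟩ : ExtLetter A loc S) = ⟨a, fun i => p.1 i.1⟩ :=
    extLetter_congr fun i hi => (hΔ b).1 _ i (Set.disjoint_left.1 hdc hi)
  simp only [Function.comp_apply, wreathStep, letter_a, letter_b]
  exact Prod.ext (congrFun ((hΔ b).comp_comm (hΔ a) hdc.symm) p.1)
    (congrFun (hσ _ _ hd) p.2)

theorem isPMap2_wreathStep (hΔ : ∀ a, IsPMap ↑(loc a) (Δ a))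
    (hσ : ∀ e : ExtLetter A loc S, IsPMap ↑(loc e.1) (σ e)) (a : A) :
    IsPMap2 ↑(loc a) (wreathStep Δ σ a) := by
  refine ⟨fun p i hi => ⟨(hΔ a).1 p.1 i hi, (hσ _).1 p.2 i hi⟩, fun p p' hpp' i hi => ?_⟩
  have letter : (⟨a, fun j => p.1 j.1⟩ : ExtLetter A loc S) = ⟨a, fun j => p'.1 j.1⟩ :=
    extLetter_congr fun j hj => (hpp' j hj).1
  refine ⟨(hΔ a).2 p.1 p'.1 (fun j hj => (hpp' j hj).1) i hi, ?_⟩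
  simp only [wreathStep, letter]
  exact (hσ _).2 p.2 p'.2 (fun j hj => (hpp' j hj).2) i hi

theorem snd_foldl_wreathStep (w : List A) (p : (∀ i, S i) × (∀ i, Q i)) :
    (w.foldl (fun p a => wreathStep Δ σ a p) p).2 =
      (transduce loc Δ p.1 w).foldl (fun q e => σ e q) p.2 := by
  induction w generalizing p with
  | nil => rfl
  | cons a w ih => exact ih (wreathStep Δ σ a p)

end Wreath

theorem local_wreath_product_principle_1_general {ι A : Type} (loc : A → Finset ι)
    {S Q : ι → Type}
    (Δ : A → (∀ i, S i) → (∀ i, S i)) (hΔ : ∀ a, IsPMap ↑(loc a) (Δ a))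
    (s_in : ∀ i, S i)
    (χ : (traceCon loc).Quotient → (traceCon (locE loc)).Quotient)
    (hχ : ∀ w : List A,
      χ ((traceCon loc).mk' (FreeMonoid.ofList w)) =
        (traceCon (locE loc)).mk' (FreeMonoid.ofList (transduce loc Δ s_in w)))
    (ψ : (traceCon (locE loc)).Quotient → (∀ i, Q i) → (∀ i, Q i))
    (hψ1 : ψ 1 = id) (hψmul : ∀ u v, ψ (u * v) = ψ v ∘ ψ u)
    (hψasync : ∀ e : ExtLetter A loc S,
      IsPMap ↑(loc e.1) (ψ ((traceCon (locE loc)).mk' (FreeMonoid.of e))))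
    (q_in : ∀ i, Q i) (Qfin : Set (∀ i, Q i))
    (L : Set (traceCon (locE loc)).Quotient)
    (hL : L = {t' | ψ t' q_in ∈ Qfin}) :
    ∃ H : (traceCon loc).Quotient →
        ((∀ i, S i) × (∀ i, Q i)) → ((∀ i, S i) × (∀ i, Q i)),
      H 1 = id ∧
      (∀ u v, H (u * v) = H v ∘ H u) ∧
      (∀ a, H ((traceCon loc).mk' (FreeMonoid.of a)) = fun p =>
        (Δ a p.1,
         ψ ((traceCon (locE loc)).mk'
            (FreeMonoid.of (⟨a, fun i => p.1 i.1⟩ : ExtLetter A loc S))) p.2)) ∧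
      (∀ a, IsPMap2 ↑(loc a) (H ((traceCon loc).mk' (FreeMonoid.of a)))) ∧
      χ ⁻¹' L = {t | (H t (s_in, q_in)).2 ∈ Qfin} := by
  set σ : ExtLetter A loc S → (∀ i, Q i) → (∀ i, Q i) :=
    fun e => ψ ((traceCon (locE loc)).mk' (FreeMonoid.of e))
  have hstep := fun a b (hd : Disjoint (loc a) (loc b)) =>
    wreathStep_comm (σ := σ) hΔ (fun _ _ => comp_comm_of_disjoint (locE loc) hψmul) hd
  refine ⟨traceAct loc (wreathStep Δ σ) hstep, traceAct_one loc _ hstep,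
    traceAct_mul loc _ hstep, traceAct_mk'_of loc _ hstep, fun a => ?_, ?_⟩
  · rw [traceAct_mk'_of]
    exact isPMap2_wreathStep hΔ hψasync a
  ext t
  obtain ⟨w, rfl⟩ := (traceCon loc).mk'_surjective t
  rw [← FreeMonoid.ofList_toList w]
  simp only [Set.mem_preimage, hχ, hL, Set.mem_ofPred_eq, apply_mk'_ofList hψ1 hψmul,
    apply_mk'_ofList (traceAct_one loc _ hstep) (traceAct_mul loc _ hstep), traceAct_mk'_of,
    snd_foldl_wreathStep]
  rfl

/-- local wreath product principle, direction 1: if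
`L ⊆ TR(Σ̃^{∥S})` is recognized by an atm `T` via an asynchronous morphism `ψ`,
then `χ_A⁻¹(L)` is recognized by `T_A ≀ T` via the asynchronous morphism `η`
with `η(a) = (φ_A(a), s ↦ ψ((a, s_a)))`, initial state `(s_in, q_in)` and
final set `S_𝒫 × Q_fin`. -/
theorem local_wreath_product_principle_1 {ι A : Type} (loc : A → Finset ι)
    {S Q : ι → Type} [∀ i, Finite (S i)] [∀ i, Nonempty (S i)]
    [∀ i, Finite (Q i)] [∀ i, Nonempty (Q i)]
    (Δ : A → (∀ i, S i) → (∀ i, S i)) (hΔ : ∀ a, IsPMap ↑(loc a) (Δ a))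
    (s_in : ∀ i, S i)
    (Φ : (traceCon loc).Quotient → (∀ i, S i) → (∀ i, S i))
    (hΦ1 : Φ 1 = id) (hΦmul : ∀ u v, Φ (u * v) = Φ v ∘ Φ u)
    (hΦof : ∀ a, Φ ((traceCon loc).mk' (FreeMonoid.of a)) = Δ a)
    (χ : (traceCon loc).Quotient → (traceCon (locE loc)).Quotient)
    (hχ : ∀ w : List A,
      χ ((traceCon loc).mk' (FreeMonoid.ofList w)) =
        (traceCon (locE loc)).mk' (FreeMonoid.ofList (transduce loc Δ s_in w)))
    (ψ : (traceCon (locE loc)).Quotient → (∀ i, Q i) → (∀ i, Q i))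
    (hψ1 : ψ 1 = id) (hψmul : ∀ u v, ψ (u * v) = ψ v ∘ ψ u)
    (hψasync : ∀ e : ExtLetter A loc S,
      IsPMap ↑(loc e.1) (ψ ((traceCon (locE loc)).mk' (FreeMonoid.of e))))
    (q_in : ∀ i, Q i) (Qfin : Set (∀ i, Q i))
    (L : Set (traceCon (locE loc)).Quotient)
    (hL : L = {t' | ψ t' q_in ∈ Qfin}) :
    ∃ H : (traceCon loc).Quotient →
        ((∀ i, S i) × (∀ i, Q i)) → ((∀ i, S i) × (∀ i, Q i)),
      H 1 = id ∧
      (∀ u v, H (u * v) = H v ∘ H u) ∧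
      (∀ a, H ((traceCon loc).mk' (FreeMonoid.of a)) = fun p =>
        (Δ a p.1,
         ψ ((traceCon (locE loc)).mk'
            (FreeMonoid.of (⟨a, fun i => p.1 i.1⟩ : ExtLetter A loc S))) p.2)) ∧
      (∀ a, IsPMap2 ↑(loc a) (H ((traceCon loc).mk' (FreeMonoid.of a)))) ∧
      χ ⁻¹' L = {t | (H t (s_in, q_in)).2 ∈ Qfin} :=
  local_wreath_product_principle_1_general loc Δ hΔ s_in χ hχ ψ hψ1 hψmul hψasync q_in Qfin L hL
end

section
/- For any asynchronous morphism η : TR(Σ̃) → T₁ ≀ T₂ with η(t) = (π₁(t), π₂(t)), initial state s_in in the global states of T₁, associated asynchronous morphism φ(a) = (first component of η(a)), asynchronous automaton A = A_φ with initial state s_in, local transducer χ_A, and induced asynchronous morphism ψ : TR(Σ̃^{∥S}) → T₂ defined by ψ((a, s_a)) = f_a(s_a): for every trace t ∈ TR(Σ̃), π₂(t)(s_in) = ψ(χ_A(t)). -/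
/-- Wreath product multiplication (left-to-right). -/
def wMul {X Y : Type} (w₁ w₂ : (X → X) × (X → Y → Y)) :
    (X → X) × (X → Y → Y) :=
  (fun x => w₂.1 (w₁.1 x), fun x => (w₂.2 (w₁.1 x)) ∘ (w₁.2 x))

/-! The transducer annotates each letter with the global state reached so far, which is exactly
the state at which the wreath product evaluates that letter's second component. Hence the
cocycle identity `π₂(a w)(s) = π₂(w)(φ(a) s) ∘ f_a(s)` and the recursion of `transduce` unfold
in lockstep, by induction on a representative word generalizing the initial state. -/

section

variable {ι A Y : Type} {loc : A → Finset ι} {S : ι → Type}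

theorem ofList_transduce_cons (Δ : A → (∀ i, S i) → (∀ i, S i)) (s : ∀ i, S i) (a : A)
    (w : List A) :
    FreeMonoid.ofList (transduce loc Δ s (a :: w)) =
      FreeMonoid.of ⟨a, fun i => s i.1⟩ * FreeMonoid.ofList (transduce loc Δ (Δ a s) w) :=
  rfl

theorem snd_ofList_eq_comp_transduce
    (f : FreeMonoid A → ((∀ i, S i) → (∀ i, S i)) × ((∀ i, S i) → Y → Y))
    (hf1 : f 1 = (id, fun _ => id)) (hfmul : ∀ u v, f (u * v) = wMul (f u) (f v))
    (g : FreeMonoid (ExtLetter A loc S) → Y → Y)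
    (hg1 : g 1 = id) (hgmul : ∀ u v, g (u * v) = g v ∘ g u)
    (hgof : ∀ (a : A) (s : ∀ i, S i),
      g (FreeMonoid.of ⟨a, fun i => s i.1⟩) = (f (FreeMonoid.of a)).2 s)
    (w : List A) (s : ∀ i, S i) :
    (f (FreeMonoid.ofList w)).2 s =
      g (FreeMonoid.ofList (transduce loc (fun a => (f (FreeMonoid.of a)).1) s w)) := by
  induction w generalizing s with
  | nil => simp [transduce, hf1, hg1]
  | cons a w ih =>
    rw [ofList_transduce_cons, hgmul, hgof, ← ih, FreeMonoid.ofList_cons, hfmul]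
    rfl

end

theorem second_component_via_transducer_general {ι A : Type} (loc : A → Finset ι)
    {S Q : ι → Type}
    (η : (traceCon loc).Quotient →
      ((∀ i, S i) → (∀ i, S i)) × ((∀ i, S i) → (∀ i, Q i) → (∀ i, Q i)))
    (hη1 : η 1 = (id, fun _ => id))
    (hηmul : ∀ u v, η (u * v) = wMul (η u) (η v))
    (s_in : ∀ i, S i)
    (χ : (traceCon loc).Quotient → (traceCon (locE loc)).Quotient)
    (hχ : ∀ w : List A,
      χ ((traceCon loc).mk' (FreeMonoid.ofList w)) =
        (traceCon (locE loc)).mk' (FreeMonoid.ofList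
          (transduce loc (fun a => (η ((traceCon loc).mk' (FreeMonoid.of a))).1)
            s_in w)))
    (ψ : (traceCon (locE loc)).Quotient → (∀ i, Q i) → (∀ i, Q i))
    (hψ1 : ψ 1 = id)
    (hψmul : ∀ u v, ψ (u * v) = ψ v ∘ ψ u)
    (hψof : ∀ (a : A) (s : ∀ i, S i),
      ψ ((traceCon (locE loc)).mk'
          (FreeMonoid.of (⟨a, fun i => s i.1⟩ : ExtLetter A loc S))) =
        (η ((traceCon loc).mk' (FreeMonoid.of a))).2 s) :
    ∀ t : (traceCon loc).Quotient, (η t).2 s_in = ψ (χ t) := by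
  intro t
  obtain ⟨w, rfl⟩ := (traceCon loc).mk'_surjective t
  rw [← FreeMonoid.ofList_toList w, hχ]
  exact snd_ofList_eq_comp_transduce (η ∘ (traceCon loc).mk')
    (by simp [hη1]) (by simp [hηmul]) (ψ ∘ (traceCon (locE loc)).mk')
    (by simp [hψ1]) (by simp [hψmul]) hψof w.toList s_in

/-- for an asynchronous morphism `η = (π₁, π₂)` into `T₁ ≀ T₂`,
with associated automaton `A = A_φ` (where `φ(a) = π₁(of a)`), local transducer
`χ_A`, and induced asynchronous morphism `ψ` (with `ψ((a, s_a)) = f_a(s)`):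
for every trace `t`, `π₂(t)(s_in) = ψ(χ_A(t))`. -/
theorem second_component_via_transducer {ι A : Type} (loc : A → Finset ι)
    {S Q : ι → Type} [∀ i, Finite (S i)] [∀ i, Nonempty (S i)]
    [∀ i, Finite (Q i)] [∀ i, Nonempty (Q i)]
    (η : (traceCon loc).Quotient →
      ((∀ i, S i) → (∀ i, S i)) × ((∀ i, S i) → (∀ i, Q i) → (∀ i, Q i)))
    (hη1 : η 1 = (id, fun _ => id))
    (hηmul : ∀ u v, η (u * v) = wMul (η u) (η v))
    (s_in : ∀ i, S i)
    (χ : (traceCon loc).Quotient → (traceCon (locE loc)).Quotient)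
    (hχ : ∀ w : List A,
      χ ((traceCon loc).mk' (FreeMonoid.ofList w)) =
        (traceCon (locE loc)).mk' (FreeMonoid.ofList
          (transduce loc (fun a => (η ((traceCon loc).mk' (FreeMonoid.of a))).1)
            s_in w)))
    (ψ : (traceCon (locE loc)).Quotient → (∀ i, Q i) → (∀ i, Q i))
    (hψ1 : ψ 1 = id)
    (hψmul : ∀ u v, ψ (u * v) = ψ v ∘ ψ u)
    (hψof : ∀ (a : A) (s : ∀ i, S i),
      ψ ((traceCon (locE loc)).mk'
          (FreeMonoid.of (⟨a, fun i => s i.1⟩ : ExtLetter A loc S))) =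
        (η ((traceCon loc).mk' (FreeMonoid.of a))).2 s) :
    ∀ t : (traceCon loc).Quotient, (η t).2 s_in = ψ (χ t) :=
  second_component_via_transducer_general loc η hη1 hηmul s_in χ hχ ψ hψ1 hψmul hψof
end
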